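/- arXiv:2203.12444 — 3 statements merged into one kernel-verified Lean document; each statement's English description precedes it below -/
import Mathlib

section
/- Let h_d(t) = 2∫₀^{arcsin√(1−t²)} (cos θ − t)^{d−1} cos θ dθ for t ∈ [0,1] and integer d ≥ 2. Then h_d is differentiable on (0,1) with h_d′(t) = −(d−1)·h_{d−1}(t); in particular h_d is decreasing on [0,1] and h_d(1) = 0. -/
/-!
For `t ∈ [0, 1]` the upper limit `arcsin √(1 - t²)` is `arccos t`, exactly where the base
`cos θ - t` of the integrand changes sign. Hence, for `n ≥ 1`,
`h_{n+1}(t) = 2 ∫₀^{π/2} max (cos θ - t) 0 ^ n * cos θ dθ` over a fixed interval. This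
integrand is Lipschitz in `t` and differentiable in `t` except on the null set `cos θ = t`, with
derivative `-n (cos θ - t)^(n-1) cos θ` on `{t ≤ cos θ}`; differentiating under the integral
sign gives `h_{n+1}' = -n h_n`. As `h_n ≥ 0`, `h_{n+1}` is antitone, and `h_d(1) = 0` because
the interval of integration collapses.
-/

open Real MeasureTheory Set

/-- `hfun d t = 2 ∫₀^{arcsin √(1−t²)} (cos θ − t)^{d−1} cos θ dθ`. -/
noncomputable def hfun (d : ℕ) (t : ℝ) : ℝ :=
  2 * ∫ θ in (0:ℝ)..(Real.arcsin (Real.sqrt (1 - t ^ 2))), (Real.cos θ - t) ^ (d - 1) * Real.cos θ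

open Filter Topology
open scoped Interval

theorem le_cos_iff_le_arccos {t θ : ℝ} (ht : t ∈ Icc (-1) 1) (hθ : θ ∈ Icc 0 π) :
    t ≤ cos θ ↔ θ ≤ arccos t := by
  conv_rhs => rw [← arccos_cos hθ.1 hθ.2]
  exact (strictAntiOn_arccos.le_iff_ge ⟨neg_one_le_cos θ, cos_le_one θ⟩ ht).symm

theorem integral_ite_le_cos {f : ℝ → ℝ} {t : ℝ} (ht : t ∈ Icc 0 1) :
    ∫ θ in 0..π / 2, (if t ≤ cos θ then f θ else 0) = ∫ θ in 0..arccos t, f θ := by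
  rw [intervalIntegral.integral_of_le pi_div_two_pos.le,
    intervalIntegral.integral_of_le (arccos_nonneg t)]
  calc ∫ θ in Ioc 0 (π / 2), (if t ≤ cos θ then f θ else 0)
      = ∫ θ in Ioc 0 (π / 2), (Iic (arccos t)).indicator f θ := by
        refine setIntegral_congr_fun measurableSet_Ioc fun θ hθ => ?_
        have hθπ : θ ≤ π := hθ.2.trans (by linarith [pi_pos])
        simp only [indicator, mem_Iic,
          le_cos_iff_le_arccos ⟨by linarith [ht.1], ht.2⟩ ⟨hθ.1.le, hθπ⟩]
    _ = ∫ θ in Ioc 0 (arccos t), f θ := by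
        rw [setIntegral_indicator measurableSet_Iic, Ioc_inter_Iic,
          min_eq_right (arccos_le_pi_div_two.2 ht.1)]

theorem hfun_eq_integral_ite (d : ℕ) {t : ℝ} (ht : t ∈ Icc 0 1) :
    hfun d t =
      2 * ∫ θ in 0..π / 2, if t ≤ cos θ then (cos θ - t) ^ (d - 1) * cos θ else 0 := by
  rw [hfun, ← arccos_eq_arcsin ht.1, integral_ite_le_cos ht]

theorem max_pow_eq_ite {n : ℕ} (hn : n ≠ 0) (x : ℝ) :
    max x 0 ^ n = if 0 ≤ x then x ^ n else 0 := by
  split_ifs with hx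
  · rw [max_eq_left hx]
  · rw [max_eq_right (not_le.1 hx).le, zero_pow hn]

theorem hfun_succ_eq_integral_max {n : ℕ} (hn : n ≠ 0) {t : ℝ} (ht : t ∈ Icc 0 1) :
    hfun (n + 1) t = 2 * ∫ θ in 0..π / 2, max (cos θ - t) 0 ^ n * cos θ := by
  simp only [hfun_eq_integral_ite _ ht, max_pow_eq_ite hn, sub_nonneg, ite_mul, zero_mul,
    Nat.add_sub_cancel]

theorem hfun_nonneg (d : ℕ) {t : ℝ} (ht : t ∈ Icc 0 1) : 0 ≤ hfun d t := by
  rw [hfun_eq_integral_ite d ht]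
  refine mul_nonneg zero_le_two
    (intervalIntegral.integral_nonneg pi_div_two_pos.le fun θ hθ => ?_)
  have hcos : 0 ≤ cos θ := cos_nonneg_of_mem_Icc ⟨by linarith [hθ.1, pi_pos], hθ.2⟩
  split_ifs with h
  · exact mul_nonneg (pow_nonneg (sub_nonneg.2 h) _) hcos
  · exact le_rfl

theorem continuous_hfun (d : ℕ) : Continuous (hfun d) := by
  unfold hfun
  fun_prop

theorem hfun_one (d : ℕ) : hfun d 1 = 0 := by
  simp [hfun]

theorem hasDerivAt_max_sub_pow {n : ℕ} (hn : n ≠ 0) {y t : ℝ} (h : y ≠ t) :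
    HasDerivAt (fun x => max (y - x) 0 ^ n)
      (-n * if t ≤ y then (y - t) ^ (n - 1) else 0) t := by
  rcases h.lt_or_gt with hlt | hgt
  · rw [if_neg hlt.not_ge, mul_zero]
    apply (hasDerivAt_const t (0 : ℝ)).congr_of_eventuallyEq
    filter_upwards [Ioi_mem_nhds hlt] with x hx
    rw [max_eq_right (by linarith [mem_Ioi.1 hx]), zero_pow hn]
  · rw [if_pos hgt.le]
    refine ((((hasDerivAt_id t).const_sub y).pow n).congr_of_eventuallyEq ?_).congr_deriv ?_
    · filter_upwards [Iio_mem_nhds hgt] with x hx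
      rw [max_eq_left (by linarith [mem_Iio.1 hx])]
      rfl
    · simp only [id]
      ring

theorem lipschitzOnWith_max_sub_pow_mul (n : ℕ) (y c t₀ : ℝ) :
    LipschitzOnWith (Real.nnabs (n * (|y| + |t₀| + 1) ^ (n - 1) * |c|))
      (fun x => max (y - x) 0 ^ n * c) (Metric.ball t₀ 1) := by
  have hbound : ∀ x ∈ Metric.ball t₀ 1, |max (y - x) 0| ≤ |y| + |t₀| + 1 := by
    intro x hx
    rw [Metric.mem_ball, Real.dist_eq] at hx
    rw [abs_of_nonneg (le_max_right _ _)]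
    refine max_le ?_ (by positivity)
    linarith [le_abs_self y, neg_abs_le t₀, (abs_sub_lt_iff.1 hx).2]
  refine LipschitzOnWith.of_dist_le_mul fun x hx x' hx' => ?_
  have hK : (0 : ℝ) ≤ n * (|y| + |t₀| + 1) ^ (n - 1) * |c| := by positivity
  rw [Real.dist_eq, Real.dist_eq, Real.coe_nnabs, abs_of_nonneg hK]
  calc |max (y - x) 0 ^ n * c - max (y - x') 0 ^ n * c|
      = |max (y - x) 0 ^ n - max (y - x') 0 ^ n| * |c| := by rw [← sub_mul, abs_mul]
    _ ≤ |max (y - x) 0 - max (y - x') 0| * n * max |max (y - x) 0| |max (y - x') 0| ^ (n - 1)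
          * |c| := by gcongr; exact abs_pow_sub_pow_le ..
    _ ≤ |x - x'| * n * (|y| + |t₀| + 1) ^ (n - 1) * |c| := by
        gcongr ?_ * _ * ?_ ^ _ * _
        · calc _ ≤ |(y - x) - (y - x')| := abs_max_sub_max_le_abs _ _ _
            _ = |x - x'| := by rw [sub_sub_sub_cancel_left, abs_sub_comm]
        · exact max_le (hbound x hx) (hbound x' hx')
    _ = n * (|y| + |t₀| + 1) ^ (n - 1) * |c| * |x - x'| := by ring

theorem hasDerivAt_integral_max_sub_pow_mul {g c : ℝ → ℝ} (hg : Continuous g)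
    (hc : Continuous c) {n : ℕ} (hn : n ≠ 0) {a b t₀ : ℝ}
    (hlevel : ∀ᵐ θ, θ ∈ Ι a b → g θ ≠ t₀) :
    HasDerivAt (fun t => ∫ θ in a..b, max (g θ - t) 0 ^ n * c θ)
      (-n * ∫ θ in a..b, if t₀ ≤ g θ then (g θ - t₀) ^ (n - 1) * c θ else 0) t₀ := by
  rw [← intervalIntegral.integral_const_mul]
  refine (intervalIntegral.hasDerivAt_integral_of_dominated_loc_of_lip
    (Metric.ball_mem_nhds t₀ one_pos)
    (bound := fun θ => n * (|g θ| + |t₀| + 1) ^ (n - 1) * |c θ|) ?_ ?_ ?_ ?_ ?_ ?_).2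
  · exact .of_forall fun t => (by fun_prop : Continuous _).aestronglyMeasurable
  · exact (by fun_prop : Continuous _).intervalIntegrable _ _
  · exact ((Measurable.ite (measurableSet_le measurable_const hg.measurable) (by fun_prop)
      measurable_const).const_mul _).aestronglyMeasurable
  · exact .of_forall fun θ _ => lipschitzOnWith_max_sub_pow_mul n (g θ) (c θ) t₀
  · exact (by fun_prop : Continuous _).intervalIntegrable _ _
  · filter_upwards [hlevel] with θ hθ hθab
    refine ((hasDerivAt_max_sub_pow hn (hθ hθab)).mul_const (c θ)).congr_deriv ?_
    split_ifs <;> ring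

theorem hasDerivAt_hfun_succ {n : ℕ} (hn : n ≠ 0) {t : ℝ} (ht : t ∈ Ioo 0 1) :
    HasDerivAt (hfun (n + 1)) (-n * hfun n t) t := by
  have hlevel : ∀ᵐ θ, θ ∈ Ι 0 (π / 2) → cos θ ≠ t := by
    filter_upwards [compl_mem_ae_iff.2 (measure_singleton (arccos t))] with θ hθ hθI hcos
    rw [uIoc_of_le pi_div_two_pos.le] at hθI
    exact hθ (by rw [← hcos, arccos_cos hθI.1.le (hθI.2.trans (by linarith [pi_pos]))]; rfl)
  have hlocal : hfun (n + 1) =ᶠ[𝓝 t]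
      fun s => 2 * ∫ θ in 0..π / 2, max (cos θ - s) 0 ^ n * cos θ :=
    eventually_of_mem (Ioo_mem_nhds ht.1 ht.2) fun s hs =>
      hfun_succ_eq_integral_max hn (Ioo_subset_Icc_self hs)
  refine (((hasDerivAt_integral_max_sub_pow_mul continuous_cos continuous_cos hn hlevel).const_mul
    2).congr_of_eventuallyEq hlocal).congr_deriv ?_
  rw [hfun_eq_integral_ite n (Ioo_subset_Icc_self ht)]
  ring

theorem stmt0 (d : ℕ) (hd : 2 ≤ d) :
    (∀ t ∈ Set.Ioo (0:ℝ) 1, HasDerivAt (hfun d) (-((d : ℝ) - 1) * hfun (d - 1) t) t) ∧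
    AntitoneOn (hfun d) (Set.Icc (0:ℝ) 1) ∧ hfun d 1 = 0 := by
  obtain ⟨n, rfl⟩ : ∃ n, d = n + 1 := ⟨d - 1, by omega⟩
  have hn : n ≠ 0 := by omega
  have hderiv : ∀ t ∈ Ioo (0 : ℝ) 1,
      HasDerivAt (hfun (n + 1)) (-(((n + 1 : ℕ) : ℝ) - 1) * hfun (n + 1 - 1) t) t := by
    intro t ht
    simpa using hasDerivAt_hfun_succ hn ht
  refine ⟨hderiv, ?_, hfun_one _⟩
  apply antitoneOn_of_deriv_nonpos (convex_Icc 0 1) (continuous_hfun _).continuousOn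
  · rw [interior_Icc]
    exact fun t ht => (hderiv t ht).differentiableAt.differentiableWithinAt
  · rw [interior_Icc]
    intro t ht
    rw [(hasDerivAt_hfun_succ hn ht).deriv]
    exact mul_nonpos_of_nonpos_of_nonneg (by simp) (hfun_nonneg n (Ioo_subset_Icc_self ht))
end

section
/- Let d ≥ 2 and 0 ≤ ε < η. Then the (2d−1)-dimensional Lebesgue measure of the set K_{ε,η} := {(ξ, τ) ∈ ℂ^{d−1} × ℝ : (ε + ‖ξ‖²)² + τ² < η²} equals κ_{2d−2}·η^d·h_d(ε/η), where κ_{2d−2} is the Lebesgue volume of the unit ball in ℝ^{2d−2} and h_d(t) = 2∫₀^{arcsin√(1−t²)}(cos θ − t)^{d−1} cos θ dθ. -/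
/-!
Slice `K_{ε,η}` at height `τ`: the slice is the ball `‖ξ‖² < √(η² - τ²) - ε` of
`ℂ^{d-1} ≅ ℝ^{2d-2}`, of volume `κ_{2d-2} (√(η² - τ²) - ε)^{d-1}`, and it is nonempty exactly
for `|τ| < √(η² - ε²)`. Integrating over `τ` and substituting `τ = η sin θ` gives `η^d h_d(ε/η)`;
the integrand in `θ` is even, which produces the factor `2` of `h_d`.
-/

open MeasureTheory

open Real Set

theorem Function.Even.intervalIntegral_neg_self {E : Type*} [NormedAddCommGroup E]
    [NormedSpace ℝ E] {f : ℝ → E} (hf : Function.Even f) {a : ℝ}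
    (hfi : IntervalIntegrable f volume 0 a) :
    ∫ x in -a..a, f x = 2 • ∫ x in 0..a, f x := by
  have hfi' : IntervalIntegrable f volume (-a) 0 := by
    simpa [hf _] using ((IntervalIntegrable.iff_comp_neg (a := 0) (b := a)).mp hfi).symm
  have hleft : ∫ x in -a..0, f x = ∫ x in 0..a, f x := by
    simpa [hf _] using intervalIntegral.integral_comp_neg (a := -a) (b := 0) f
  rw [← intervalIntegral.integral_add_adjacent_intervals hfi' hfi, hleft, two_nsmul]

theorem volume_sum_normSq_lt {ι : Type*} [Fintype ι] [Nonempty ι] (c : ℝ) :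
    volume {x : ι → ℂ | ∑ j, Complex.normSq (x j) < c} =
      ENNReal.ofReal c ^ Fintype.card ι *
        ENNReal.ofReal (π ^ Fintype.card ι / (Fintype.card ι).factorial) := by
  have hset : {x : ι → ℂ | ∑ j, Complex.normSq (x j) < c} =
      {x : ι → ℂ | (∑ j, ‖x j‖ ^ (2:ℝ)) ^ (1 / (2:ℝ)) < √c} := by
    ext x
    simp only [mem_ofPred_eq, Real.rpow_two, ← Complex.normSq_eq_norm_sq, ← Real.sqrt_eq_rpow,
      Real.sqrt_lt_sqrt_iff (Finset.sum_nonneg fun j _ => Complex.normSq_nonneg _)]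
  have hsq : ENNReal.ofReal √c ^ 2 = ENNReal.ofReal c := by
    rcases le_total c 0 with hc | hc
    · simp [Real.sqrt_eq_zero_of_nonpos hc, ENNReal.ofReal_of_nonpos hc]
    · rw [← ENNReal.ofReal_pow (Real.sqrt_nonneg c), Real.sq_sqrt hc]
  rw [hset, Complex.volume_sum_rpow_lt _ one_le_two, pow_mul, hsq]
  congr 3
  · norm_num
  · rw [mul_div_cancel_left₀ _ two_ne_zero, Real.Gamma_nat_eq_factorial]

theorem sqrt_sq_sub_sq_sub_pos_iff {ε η τ : ℝ} (hε : 0 ≤ ε) :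
    0 < √(η ^ 2 - τ ^ 2) - ε ↔ τ ∈ Ioo (-√(η ^ 2 - ε ^ 2)) √(η ^ 2 - ε ^ 2) := by
  rw [sub_pos, Real.lt_sqrt hε, mem_Ioo, ← Real.sq_lt, lt_sub_comm]

theorem volume_sublevel_eq_lintegral {ι : Type*} [Fintype ι] [Nonempty ι] {ε : ℝ}
    (hε : 0 ≤ ε) (η : ℝ) :
    volume {p : (ι → ℂ) × ℝ | (ε + ∑ j, Complex.normSq (p.1 j)) ^ 2 + p.2 ^ 2 < η ^ 2} =
      (∫⁻ τ, ENNReal.ofReal (√(η ^ 2 - τ ^ 2) - ε) ^ Fintype.card ι) *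
        ENNReal.ofReal (π ^ Fintype.card ι / (Fintype.card ι).factorial) := by
  have hmeas : MeasurableSet
      {p : (ι → ℂ) × ℝ | (ε + ∑ j, Complex.normSq (p.1 j)) ^ 2 + p.2 ^ 2 < η ^ 2} :=
    measurableSet_lt (by fun_prop) (by fun_prop)
  have hslice (τ : ℝ) : (fun x : ι → ℂ => (x, τ)) ⁻¹'
      {p : (ι → ℂ) × ℝ | (ε + ∑ j, Complex.normSq (p.1 j)) ^ 2 + p.2 ^ 2 < η ^ 2} =
      {x | ∑ j, Complex.normSq (x j) < √(η ^ 2 - τ ^ 2) - ε} := by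
    ext x
    rw [mem_preimage, mem_ofPred_eq, mem_ofPred_eq, lt_sub_iff_add_lt',
      Real.lt_sqrt (add_nonneg hε (Finset.sum_nonneg fun j _ => Complex.normSq_nonneg _)),
      lt_sub_iff_add_lt]
  rw [Measure.volume_eq_prod, Measure.prod_apply_symm hmeas]
  simp_rw [hslice, volume_sum_normSq_lt]
  exact lintegral_mul_const _ (by fun_prop)

theorem lintegral_ofReal_sqrt_sq_sub_sq_sub_pow {ε : ℝ} (hε : 0 ≤ ε) (η : ℝ) {n : ℕ}
    (hn : n ≠ 0) :
    ∫⁻ τ, ENNReal.ofReal (√(η ^ 2 - τ ^ 2) - ε) ^ n =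
      ENNReal.ofReal
        (∫ τ in -√(η ^ 2 - ε ^ 2)..√(η ^ 2 - ε ^ 2), (√(η ^ 2 - τ ^ 2) - ε) ^ n) := by
  set T := √(η ^ 2 - ε ^ 2)
  have hsupp :
      (fun τ => ENNReal.ofReal (√(η ^ 2 - τ ^ 2) - ε) ^ n).support ⊆ Ioo (-T) T := by
    intro τ hτ
    by_contra hout
    rw [← sqrt_sq_sub_sq_sub_pos_iff hε, not_lt] at hout
    exact hτ (by simp [ENNReal.ofReal_of_nonpos hout, hn])
  have hint : IntegrableOn (fun τ => (√(η ^ 2 - τ ^ 2) - ε) ^ n) (Ioo (-T) T) :=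
    (Continuous.integrableOn_Icc (by fun_prop)).mono_set Ioo_subset_Icc_self
  have hpos : ∀ᵐ τ ∂volume.restrict (Ioo (-T) T), 0 ≤ (√(η ^ 2 - τ ^ 2) - ε) ^ n :=
    ae_restrict_of_forall_mem measurableSet_Ioo fun τ hτ =>
      pow_nonneg ((sqrt_sq_sub_sq_sub_pos_iff hε).mpr hτ).le n
  rw [← setLIntegral_eq_of_support_subset hsupp,
    intervalIntegral.integral_of_le (neg_le_self (Real.sqrt_nonneg _)),
    integral_Ioc_eq_integral_Ioo, ofReal_integral_eq_lintegral_ofReal hint hpos]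
  refine setLIntegral_congr_fun measurableSet_Ioo fun τ hτ => ?_
  rw [ENNReal.ofReal_pow ((sqrt_sq_sub_sq_sub_pos_iff hε).mpr hτ).le]

theorem mul_sin_arcsin_sqrt_one_sub_div_sq (ε : ℝ) {η : ℝ} (hη : 0 < η) :
    η * sin (arcsin √(1 - (ε / η) ^ 2)) = √(η ^ 2 - ε ^ 2) := by
  rw [sin_arcsin (by linarith [Real.sqrt_nonneg (1 - (ε / η) ^ 2)])
    (Real.sqrt_le_one.mpr (by linarith [sq_nonneg (ε / η)]))]
  calc η * √(1 - (ε / η) ^ 2) = √(η ^ 2 * (1 - (ε / η) ^ 2)) := by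
        rw [Real.sqrt_mul (sq_nonneg η), Real.sqrt_sq hη.le]
    _ = √(η ^ 2 - ε ^ 2) := by
        congr 1
        field_simp

/-- The substitution `τ = η sin θ`. -/
theorem integral_sqrt_sq_sub_sq_sub_pow (n : ℕ) {ε η : ℝ} (hε : 0 ≤ ε) (hεη : ε < η) :
    ∫ τ in -√(η ^ 2 - ε ^ 2)..√(η ^ 2 - ε ^ 2), (√(η ^ 2 - τ ^ 2) - ε) ^ n =
      η ^ (n + 1) * hfun (n + 1) (ε / η) := by
  have hη : 0 < η := hε.trans_lt hεη
  set A := arcsin √(1 - (ε / η) ^ 2)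
  have hA : η * sin A = √(η ^ 2 - ε ^ 2) := mul_sin_arcsin_sqrt_one_sub_div_sq ε hη
  have hcos : ∀ θ ∈ uIcc (-A) A, 0 ≤ cos θ := by
    intro θ hθ
    have hA0 : 0 ≤ A := arcsin_nonneg.mpr (Real.sqrt_nonneg _)
    have hAπ : A ≤ π / 2 := arcsin_le_pi_div_two _
    rw [uIcc_of_le (by linarith)] at hθ
    exact cos_nonneg_of_mem_Icc ⟨by linarith [hθ.1], by linarith [hθ.2]⟩
  have hintegrand : ∀ θ ∈ uIcc (-A) A,
      (η * cos θ) • (√(η ^ 2 - (η * sin θ) ^ 2) - ε) ^ n =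
        η ^ (n + 1) * ((cos θ - ε / η) ^ n * cos θ) := by
    intro θ hθ
    have hsqrt : √(η ^ 2 - (η * sin θ) ^ 2) = η * cos θ := by
      rw [← Real.sqrt_sq (mul_nonneg hη.le (hcos θ hθ))]
      congr 1
      nlinarith [sin_sq_add_cos_sq θ]
    have hfactor : η * cos θ - ε = η * (cos θ - ε / η) := by
      rw [mul_sub, mul_div_cancel₀ _ hη.ne']
    rw [hsqrt, smul_eq_mul, hfactor, mul_pow]
    ring
  have hderiv : ∀ θ ∈ uIcc (-A) A, HasDerivAt (fun θ => η * sin θ) (η * cos θ) θ :=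
    fun θ _ => (hasDerivAt_sin θ).const_mul η
  calc ∫ τ in -√(η ^ 2 - ε ^ 2)..√(η ^ 2 - ε ^ 2), (√(η ^ 2 - τ ^ 2) - ε) ^ n
      = ∫ τ in η * sin (-A)..η * sin A, (√(η ^ 2 - τ ^ 2) - ε) ^ n := by
        rw [sin_neg, mul_neg, hA]
    _ = ∫ θ in -A..A, (η * cos θ) • (√(η ^ 2 - (η * sin θ) ^ 2) - ε) ^ n :=
        (intervalIntegral.integral_deriv_smul_comp hderiv (by fun_prop) (by fun_prop)).symm
    _ = η ^ (n + 1) * ∫ θ in -A..A, (cos θ - ε / η) ^ n * cos θ := by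
        rw [intervalIntegral.integral_congr hintegrand, intervalIntegral.integral_const_mul]
    _ = η ^ (n + 1) * hfun (n + 1) (ε / η) := by
        have heven : Function.Even fun θ => (cos θ - ε / η) ^ n * cos θ := fun θ => by
          simp only [cos_neg]
        rw [heven.intervalIntegral_neg_self (Continuous.intervalIntegrable (by fun_prop) _ _),
          hfun, Nat.add_sub_cancel, two_nsmul, two_mul]

theorem toReal_volume_ball_zero_one_of_finrank_eq {E : Type*} [NormedAddCommGroup E]
    [InnerProductSpace ℝ E] [FiniteDimensional ℝ E] [MeasurableSpace E] [BorelSpace E]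
    [Nontrivial E] {k : ℕ} (hk : Module.finrank ℝ E = 2 * k) :
    (volume (Metric.ball (0 : E) 1)).toReal = π ^ k / k.factorial := by
  rw [InnerProductSpace.volume_ball_of_dim_even hk, ENNReal.ofReal_one, one_pow, one_mul,
    ENNReal.toReal_ofReal (by positivity)]

theorem stmt13 (d : ℕ) (hd : 2 ≤ d) (ε η : ℝ) (hε : 0 ≤ ε) (hεη : ε < η) :
    volume {p : (Fin (d - 1) → ℂ) × ℝ |
        (ε + ∑ j, Complex.normSq (p.1 j)) ^ 2 + p.2 ^ 2 < η ^ 2} =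
      ENNReal.ofReal
        ((volume (Metric.ball (0 : EuclideanSpace ℝ (Fin (2 * d - 2))) 1)).toReal *
          η ^ d * hfun d (ε / η)) := by
  obtain ⟨n, rfl⟩ : ∃ n, d = n + 1 := ⟨d - 1, by omega⟩
  have hn : n ≠ 0 := by omega
  have : Nonempty (Fin n) := Fin.pos_iff_nonempty.mp (Nat.pos_of_ne_zero hn)
  have : Nontrivial (EuclideanSpace ℝ (Fin (2 * (n + 1) - 2))) :=
    Module.nontrivial_of_finrank_pos (R := ℝ)
      (by rw [finrank_euclideanSpace_fin]; omega)
  rw [toReal_volume_ball_zero_one_of_finrank_eq (k := n)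
      (by rw [finrank_euclideanSpace_fin]; omega),
    Nat.add_sub_cancel, volume_sublevel_eq_lintegral hε, Fintype.card_fin,
    lintegral_ofReal_sqrt_sq_sub_sq_sub_pow hε η hn, integral_sqrt_sq_sub_sq_sub_pow n hε hεη,
    mul_comm (ENNReal.ofReal _),
    ← ENNReal.ofReal_mul (by positivity), mul_assoc]
end

section
/- Let F : finite subsets of a space X → ℝ and define the second difference operator D²_{z,w}F(φ) = F(φ ∪ {z, w}) − F(φ ∪ {w}) − F(φ ∪ {z}) + F(φ). If F(φ) = μ(∪_{x∈φ} A_x) for a finite measure μ and measurable sets A_x ⊆ X′, then |D²_{z,w}F(φ)| ≤ μ(A_z ∩ A_w); in particular D²_{z,w}F(φ) = 0 whenever A_z ∩ A_w = ∅. -/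
open MeasureTheory

theorem stmt17 {X X' : Type*} [DecidableEq X] [MeasurableSpace X'] (μ : Measure X')
    [IsFiniteMeasure μ] (A : X → Set X') (hA : ∀ x, MeasurableSet (A x))
    (φ : Finset X) (z w : X) :
    |(μ (⋃ x ∈ insert z (insert w φ), A x)).toReal - (μ (⋃ x ∈ insert w φ, A x)).toReal -
        (μ (⋃ x ∈ insert z φ, A x)).toReal + (μ (⋃ x ∈ φ, A x)).toReal| ≤
      (μ (A z ∩ A w)).toReal ∧
    (A z ∩ A w = ∅ →
      (μ (⋃ x ∈ insert z (insert w φ), A x)).toReal - (μ (⋃ x ∈ insert w φ, A x)).toReal -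
        (μ (⋃ x ∈ insert z φ, A x)).toReal + (μ (⋃ x ∈ φ, A x)).toReal = 0) := by
  classical
  set U : Set X' := ⋃ x ∈ φ, A x with hU
  have hUm : MeasurableSet U := Finset.measurableSet_biUnion _ fun x _ => hA x
  have hf : ∀ s t : Set X', MeasurableSet t → Disjoint s t →
      (μ (s ∪ t)).toReal = (μ s).toReal + (μ t).toReal := by
    intro s t ht hd
    rw [measure_union hd ht, ENNReal.toReal_add (measure_ne_top _ _) (measure_ne_top _ _)]
  have e1 : ⋃ x ∈ insert z (insert w φ), A x = (A z \ (A w ∪ U)) ∪ (A w ∪ U) := by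
    rw [Finset.set_biUnion_insert, Finset.set_biUnion_insert, Set.diff_union_self]
  have e2 : ⋃ x ∈ insert w φ, A x = A w ∪ U := by rw [Finset.set_biUnion_insert]
  have e3 : ⋃ x ∈ insert z φ, A x =
      (A z \ (A w ∪ U)) ∪ (((A z ∩ A w) \ U) ∪ U) := by
    rw [Finset.set_biUnion_insert]
    ext p
    simp only [Set.mem_union, Set.mem_diff, Set.mem_inter_iff]
    tauto
  have d1 : Disjoint (A z \ (A w ∪ U)) (A w ∪ U) := Set.disjoint_sdiff_left
  have d2 : Disjoint (A z \ (A w ∪ U)) (((A z ∩ A w) \ U) ∪ U) := by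
    refine d1.mono_right ?_
    intro p hp
    rcases hp with hp | hp
    · exact Or.inl hp.1.2
    · exact Or.inr hp
  have d3 : Disjoint ((A z ∩ A w) \ U) U := Set.disjoint_sdiff_left
  have m1 : MeasurableSet (A w ∪ U) := (hA w).union hUm
  have m3 : MeasurableSet (((A z ∩ A w) \ U) ∪ U) :=
    (((hA z).inter (hA w)).diff hUm).union hUm
  have key : (μ (⋃ x ∈ insert z (insert w φ), A x)).toReal -
      (μ (⋃ x ∈ insert w φ, A x)).toReal - (μ (⋃ x ∈ insert z φ, A x)).toReal +
      (μ U).toReal = -(μ ((A z ∩ A w) \ U)).toReal := by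
    rw [e1, e2, e3, hf _ _ m1 d1, hf _ _ m3 d2, hf _ _ hUm d3]
    ring
  constructor
  · rw [key, abs_neg, abs_of_nonneg ENNReal.toReal_nonneg]
    exact ENNReal.toReal_mono (measure_ne_top _ _)
      (measure_mono Set.diff_subset)
  · intro h
    rw [key, h, Set.empty_diff, measure_empty]
    simp
end
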